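/- (Long regression, general decomposition.) Assume positivity and that the (K+1)×(K+1) covariance matrix of (D,A) is positive definite. Then the long-regression slope satisfies Δ_long = Σ_{a∈𝒜} ω_dce^l(a)·E[Y(1,a)−Y(0,a) | D=1, A=a] + Σ_{a∈𝒜} ω_ind^l(a)·(E[Y(0,a) | D=0, A=a] − E[Y(0,0) | D=0, A=0]) + Σ_{a∈𝒜} ω_dce^l(a)·(E[Y(0,a) | D=1, A=a] − E[Y(0,a) | D=0, A=a]). -/

import Mathlib

open MeasureTheory ProbabilityTheory BigOperators

noncomputable section

variable {Ω : Type} [MeasurableSpace Ω] {K : ℕ}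

/-- Expectation of a real-valued random variable. -/
def Exp (P : Measure Ω) (Z : Ω → ℝ) : ℝ := ∫ ω, Z ω ∂P

/-- Probability of an event, as a real number. -/
def Pr (P : Measure Ω) (s : Set Ω) : ℝ := (P s).toReal

/-- Conditional expectation given an event, defined as a ratio. -/
def CE (P : Measure Ω) (Z : Ω → ℝ) (s : Set Ω) : ℝ :=
  Exp P (fun ω => Z ω * s.indicator (fun _ => (1:ℝ)) ω) / Pr P s

/-- Covariance of two real-valued random variables. -/
def Cov (P : Measure Ω) (Z W : Ω → ℝ) : ℝ :=
  Exp P (fun ω => Z ω * W ω) - Exp P Z * Exp P W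

/-- The event {D = d, A = a}. -/
def evDA (D : Ω → ℕ) (A : Ω → Fin K → ℕ) (d : ℕ) (a : Fin K → ℕ) : Set Ω :=
  {ω | D ω = d ∧ A ω = a}

/-- The event {D = d}. -/
def evD (D : Ω → ℕ) (d : ℕ) : Set Ω := {ω | D ω = d}

/-- The event {A = a}. -/
def evA (A : Ω → Fin K → ℕ) (a : Fin K → ℕ) : Set Ω := {ω | A ω = a}

/-- π_d(a) = P(A = a | D = d). -/
def piP (P : Measure Ω) (D : Ω → ℕ) (A : Ω → Fin K → ℕ) (d : ℕ) (a : Fin K → ℕ) : ℝ :=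
  Pr P (evDA D A d a) / Pr P (evD D d)

/-- The observed outcome Y = Σ_{(d,a)} Y(d,a)·1{D=d, A=a}. -/
def Yobs (D : Ω → ℕ) (A : Ω → Fin K → ℕ) (𝒜 : Finset (Fin K → ℕ))
    (Ypot : ℕ → (Fin K → ℕ) → Ω → ℝ) : Ω → ℝ :=
  fun ω => ∑ d ∈ ({0, 1} : Finset ℕ), ∑ a ∈ 𝒜,
    Ypot d a ω * (if D ω = d ∧ A ω = a then (1:ℝ) else 0)

/-- μ(d,a) = E[Y(d,a)]. -/
def muP (P : Measure Ω) (Ypot : ℕ → (Fin K → ℕ) → Ω → ℝ) (d : ℕ) (a : Fin K → ℕ) : ℝ :=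
  Exp P (Ypot d a)

/-- The random vector (D, A) as a real-valued family indexed by Unit ⊕ Fin K. -/
def DAvec (D : Ω → ℕ) (A : Ω → Fin K → ℕ) : Unit ⊕ Fin K → Ω → ℝ :=
  Sum.elim (fun _ ω => (D ω : ℝ)) (fun j ω => (A ω j : ℝ))

/-- The (K+1)×(K+1) covariance matrix of (D, A). -/
def covDAmat (P : Measure Ω) (D : Ω → ℕ) (A : Ω → Fin K → ℕ) :
    Matrix (Unit ⊕ Fin K) (Unit ⊕ Fin K) ℝ :=
  Matrix.of fun i j => Cov P (DAvec D A i) (DAvec D A j)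

/-- The K×K covariance matrix Var(A). -/
def varAmat (P : Measure Ω) (A : Ω → Fin K → ℕ) : Matrix (Fin K) (Fin K) ℝ :=
  Matrix.of fun i j => Cov P (fun ω => (A ω i : ℝ)) (fun ω => (A ω j : ℝ))

/-- The row vector Cov(D, A). -/
def covDA (P : Measure Ω) (D : Ω → ℕ) (A : Ω → Fin K → ℕ) : Fin K → ℝ :=
  fun j => Cov P (fun ω => (D ω : ℝ)) (fun ω => (A ω j : ℝ))

/-- M = Cov(D,A) ⬝ Var(A)⁻¹. -/
def Mlong (P : Measure Ω) (D : Ω → ℕ) (A : Ω → Fin K → ℕ) : Fin K → ℝ :=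
  fun j => ∑ i, covDA P D A i * (varAmat P A)⁻¹ i j

/-- Var(D). -/
def varD (P : Measure Ω) (D : Ω → ℕ) : ℝ :=
  Cov P (fun ω => (D ω : ℝ)) (fun ω => (D ω : ℝ))

/-- denom = Var(D) − Cov(D,A)·Var(A)⁻¹·Cov(A,D). -/
def denomL (P : Measure Ω) (D : Ω → ℕ) (A : Ω → Fin K → ℕ) : ℝ :=
  varD P D - ∑ j, Mlong P D A j * covDA P D A j

/-- The long-regression weight ω_dce^l(a). -/
def wdceL (P : Measure Ω) (D : Ω → ℕ) (A : Ω → Fin K → ℕ) (a : Fin K → ℕ) : ℝ :=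
  piP P D A 1 a *
    (varD P D - Pr P (evD D 1) *
      ∑ j, Mlong P D A j * ((a j : ℝ) - Exp P (fun ω => (A ω j : ℝ)))) / denomL P D A

/-- The long-regression weight ω_ind^l(a). -/
def windL (P : Measure Ω) (D : Ω → ℕ) (A : Ω → Fin K → ℕ) (a : Fin K → ℕ) : ℝ :=
  (varD P D * (piP P D A 1 a - piP P D A 0 a) -
    Pr P (evA A a) * ∑ j, Mlong P D A j * ((a j : ℝ) - Exp P (fun ω => (A ω j : ℝ))))
  / denomL P D A

/-- The residual of the long regression of Y on (1, D, A). -/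
def residLong (D : Ω → ℕ) (A : Ω → Fin K → ℕ) (𝒜 : Finset (Fin K → ℕ))
    (Ypot : ℕ → (Fin K → ℕ) → Ω → ℝ) (Δ θ₀ : ℝ) (θ : Fin K → ℝ) : Ω → ℝ :=
  fun ω => Yobs D A 𝒜 Ypot ω - Δ * (D ω : ℝ) - θ₀ - ∑ j, θ j * (A ω j : ℝ)

/-- The random vector W = (A, A·D) as a real-valued family indexed by Fin K ⊕ Fin K. -/
def Wvec (D : Ω → ℕ) (A : Ω → Fin K → ℕ) : Fin K ⊕ Fin K → Ω → ℝ :=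
  Sum.elim (fun j ω => (A ω j : ℝ)) (fun j ω => (A ω j : ℝ) * (D ω : ℝ))

/-- The 2K×2K covariance matrix Var(W), W = (A, AD). -/
def varWmat (P : Measure Ω) (D : Ω → ℕ) (A : Ω → Fin K → ℕ) :
    Matrix (Fin K ⊕ Fin K) (Fin K ⊕ Fin K) ℝ :=
  Matrix.of fun u v => Cov P (Wvec D A u) (Wvec D A v)

/-- The row vector Cov(D, W). -/
def covDW (P : Measure Ω) (D : Ω → ℕ) (A : Ω → Fin K → ℕ) : Fin K ⊕ Fin K → ℝ :=
  fun u => Cov P (fun ω => (D ω : ℝ)) (Wvec D A u)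

/-- M = Cov(D,W) ⬝ Var(W)⁻¹ for the interaction regression. -/
def Minter (P : Measure Ω) (D : Ω → ℕ) (A : Ω → Fin K → ℕ) : Fin K ⊕ Fin K → ℝ :=
  fun v => ∑ u, covDW P D A u * (varWmat P D A)⁻¹ u v

/-- denom = Var(D) − M·Cov(W,D) for the interaction regression. -/
def denomI (P : Measure Ω) (D : Ω → ℕ) (A : Ω → Fin K → ℕ) : ℝ :=
  varD P D - ∑ v, Minter P D A v * covDW P D A v

/-- E[A_j | D = 1]. -/
def condA1 (P : Measure Ω) (D : Ω → ℕ) (A : Ω → Fin K → ℕ) (j : Fin K) : ℝ :=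
  CE P (fun ω => (A ω j : ℝ)) (evD D 1)

/-- The random vector (D, A, AD) as a real-valued family. -/
def DADvec (D : Ω → ℕ) (A : Ω → Fin K → ℕ) : Unit ⊕ (Fin K ⊕ Fin K) → Ω → ℝ :=
  Sum.elim (fun _ ω => (D ω : ℝ)) (Wvec D A)

/-- The (2K+1)×(2K+1) covariance matrix of (D, A, AD). -/
def covDADmat (P : Measure Ω) (D : Ω → ℕ) (A : Ω → Fin K → ℕ) :
    Matrix (Unit ⊕ (Fin K ⊕ Fin K)) (Unit ⊕ (Fin K ⊕ Fin K)) ℝ :=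
  Matrix.of fun i j => Cov P (DADvec D A i) (DADvec D A j)

/-- The interaction-regression weight ω_dce^i(a). -/
def wdceI (P : Measure Ω) (D : Ω → ℕ) (A : Ω → Fin K → ℕ) (a : Fin K → ℕ) : ℝ :=
  piP P D A 1 a *
    (varD P D
      - Pr P (evD D 1) *
          ∑ j, Minter P D A (Sum.inl j) * ((a j : ℝ) - Exp P (fun ω => (A ω j : ℝ)))
      - Pr P (evD D 1) *
          ∑ j, Minter P D A (Sum.inr j) * ((a j : ℝ) - Pr P (evD D 1) * condA1 P D A j))
  / denomI P D A

/-- The interaction-regression weight ω_ind^i(a). -/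
def windI (P : Measure Ω) (D : Ω → ℕ) (A : Ω → Fin K → ℕ) (a : Fin K → ℕ) : ℝ :=
  (varD P D * (piP P D A 1 a - piP P D A 0 a)
    - ∑ j, Minter P D A (Sum.inl j) * Pr P (evA A a) * ((a j : ℝ) - Exp P (fun ω => (A ω j : ℝ)))
    - Pr P (evD D 1) *
        ∑ j, Minter P D A (Sum.inr j) *
          (piP P D A 1 a * (a j : ℝ) - Pr P (evA A a) * condA1 P D A j))
  / denomI P D A

/-- The residual of the interaction regression of Y on (1, D, A, AD). -/
def residInter (D : Ω → ℕ) (A : Ω → Fin K → ℕ) (𝒜 : Finset (Fin K → ℕ))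
    (Ypot : ℕ → (Fin K → ℕ) → Ω → ℝ) (Δ θ₀ : ℝ) (θ lam : Fin K → ℝ) : Ω → ℝ :=
  fun ω => Yobs D A 𝒜 Ypot ω - Δ * (D ω : ℝ) - θ₀ - (∑ j, θ j * (A ω j : ℝ))
    - ∑ j, lam j * (A ω j : ℝ) * (D ω : ℝ)

/-- P(D = d | A = a). -/
def condDgivenA (P : Measure Ω) (D : Ω → ℕ) (A : Ω → Fin K → ℕ) (d : ℕ) (a : Fin K → ℕ) : ℝ :=
  Pr P (evDA D A d a) / Pr P (evA A a)

/-- The SFE weight ω_sfe(a). -/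
def wsfe (P : Measure Ω) (D : Ω → ℕ) (A : Ω → Fin K → ℕ) (𝒜 : Finset (Fin K → ℕ))
    (a : Fin K → ℕ) : ℝ :=
  condDgivenA P D A 1 a * condDgivenA P D A 0 a * Pr P (evA A a) /
    ∑ a' ∈ 𝒜, condDgivenA P D A 1 a' * condDgivenA P D A 0 a' * Pr P (evA A a')

/-- The residual of the SFE regression of Y on (D, {1{A=a}}). -/
def residSFE (D : Ω → ℕ) (A : Ω → Fin K → ℕ) (𝒜 : Finset (Fin K → ℕ))
    (Ypot : ℕ → (Fin K → ℕ) → Ω → ℝ) (Δ : ℝ) (θ : (Fin K → ℕ) → ℝ) : Ω → ℝ :=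
  fun ω => Yobs D A 𝒜 Ypot ω - Δ * (D ω : ℝ) -
    ∑ a ∈ 𝒜, θ a * (if A ω = a then (1:ℝ) else 0)

/-- The residual of the saturated regression of Y on ({1{A=a}}, {D·1{A=a}}). -/
def residSAT (D : Ω → ℕ) (A : Ω → Fin K → ℕ) (𝒜 : Finset (Fin K → ℕ))
    (Ypot : ℕ → (Fin K → ℕ) → Ω → ℝ) (γ Δsat : (Fin K → ℕ) → ℝ) : Ω → ℝ :=
  fun ω => Yobs D A 𝒜 Ypot ω - (∑ a ∈ 𝒜, γ a * (if A ω = a then (1:ℝ) else 0)) -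
    ∑ a ∈ 𝒜, Δsat a * (D ω : ℝ) * (if A ω = a then (1:ℝ) else 0)

/-!
Frisch–Waugh–Lovell. Let `D̃ = D - p - ∑ⱼ Mⱼ (Aⱼ - E Aⱼ)` be the population residual of `D` on
`(1, A)`, where `p = P(D = 1)`. Since `D̃` is an affine combination of the regressors, the normal
equations give `E[V D̃] = 0`; moreover `E[D̃] = 0`, `E[Aⱼ D̃] = 0` (because `M Var(A) = Cov(D, A)`)
and `E[D D̃] = denom`, so `Δ_long · denom = E[Y D̃]`. As `(D, A)` takes finitely many values,
`E[Y D̃] = ∑ₐ ∑_d P(d, a) E[Y(d, a) | d, a] D̃(d, a)`. Finally `ω_dce^l(a) · denom = P(1, a) D̃(1, a)`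
and `ω_ind^l(a) · denom = ∑_d P(d, a) D̃(d, a)`; the latter sum to `E[D̃] = 0` over `a`, which
removes the baseline `E[Y(0, 0) | D = 0, A = 0]`.
-/

section FiniteSums

variable {X ι : Type*} [Fintype ι] {s : Finset X}

theorem sum_mul_sub_affine (w d : X → ℝ) (a : X → ι → ℝ) (c : ℝ) (M α : ι → ℝ) :
    ∑ x ∈ s, w x * (d x - c - ∑ j, M j * (a x j - α j))
      = (∑ x ∈ s, w x * d x - (∑ x ∈ s, w x) * c)
        - ∑ j, M j * (∑ x ∈ s, w x * a x j - (∑ x ∈ s, w x) * α j) := by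
  have hx : ∀ x, w x * (d x - c - ∑ j, M j * (a x j - α j))
      = w x * d x - w x * c - ∑ j, M j * (w x * a x j - w x * α j) := fun x => by
    rw [mul_sub, mul_sub, Finset.mul_sum]
    exact congrArg _ (Finset.sum_congr rfl fun j _ => by ring)
  simp only [hx, Finset.sum_sub_distrib, Finset.sum_mul]
  rw [Finset.sum_comm (s := s)]
  simp only [mul_sub, Finset.mul_sum, Finset.sum_sub_distrib]

theorem sum_mul_eq_mul_sum_of_orthogonal {q y d r : X → ℝ} {a : X → ι → ℝ} {Δ θ₀ : ℝ}
    {θ : ι → ℝ}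
    (horth : ∑ x ∈ s, q x * (y x - (Δ * d x + θ₀ + ∑ j, θ j * a x j)) * r x = 0)
    (hr : ∑ x ∈ s, q x * r x = 0) (har : ∀ j, ∑ x ∈ s, q x * a x j * r x = 0) :
    ∑ x ∈ s, q x * y x * r x = Δ * ∑ x ∈ s, q x * d x * r x := by
  have hθ : ∑ x ∈ s, ∑ j, θ j * (q x * a x j * r x) = 0 := by
    rw [Finset.sum_comm]
    exact Finset.sum_eq_zero fun j _ => by rw [← Finset.mul_sum, har j, mul_zero]
  have hsplit : ∑ x ∈ s, q x * (y x - (Δ * d x + θ₀ + ∑ j, θ j * a x j)) * r x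
      = ∑ x ∈ s, q x * y x * r x - Δ * ∑ x ∈ s, q x * d x * r x
        - θ₀ * ∑ x ∈ s, q x * r x - ∑ x ∈ s, ∑ j, θ j * (q x * a x j * r x) := by
    simp only [Finset.mul_sum, ← Finset.sum_sub_distrib]
    refine Finset.sum_congr rfl fun x _ => ?_
    have hθx : ∑ j, θ j * (q x * a x j * r x) = q x * (∑ j, θ j * a x j) * r x := by
      rw [Finset.mul_sum, Finset.sum_mul]
      exact Finset.sum_congr rfl fun j _ => by ring
    rw [hθx]
    ring
  linear_combination horth - hsplit + θ₀ * hr + hθ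

theorem eq_sum_dce_add_sum_ind (a₀ : X) {Δ den : ℝ} (hden : den ≠ 0)
    {wdce wind q₀ q₁ r₀ r₁ y₀ y₁ c : X → ℝ}
    (hwdce : ∀ a ∈ s, wdce a * den = q₁ a * r₁ a)
    (hwind : ∀ a ∈ s, wind a * den = q₀ a * r₀ a + q₁ a * r₁ a)
    (hsum : ∑ a ∈ s, (q₀ a * r₀ a + q₁ a * r₁ a) = 0)
    (hΔ : Δ * den = ∑ a ∈ s, (q₀ a * y₀ a * r₀ a + q₁ a * y₁ a * r₁ a)) :
    Δ = ∑ a ∈ s, wdce a * (y₁ a - c a) + ∑ a ∈ s, wind a * (y₀ a - y₀ a₀)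
      + ∑ a ∈ s, wdce a * (c a - y₀ a) := by
  refine mul_right_cancel₀ hden (hΔ.trans ?_)
  calc ∑ a ∈ s, (q₀ a * y₀ a * r₀ a + q₁ a * y₁ a * r₁ a)
      = ∑ a ∈ s, ((q₀ a * y₀ a * r₀ a + q₁ a * y₁ a * r₁ a)
          - y₀ a₀ * (q₀ a * r₀ a + q₁ a * r₁ a)) := by
        rw [Finset.sum_sub_distrib, ← Finset.mul_sum, hsum, mul_zero, sub_zero]
    _ = _ := by
        simp only [add_mul, Finset.sum_mul, ← Finset.sum_add_distrib]
        refine Finset.sum_congr rfl fun a ha => ?_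
        linear_combination (y₀ a₀ - y₀ a) * hwind a ha - (y₁ a - y₀ a) * hwdce a ha

end FiniteSums

section FinitelyValued

variable {α X : Type*} [MeasurableSpace α] [MeasurableSpace X] [MeasurableSingletonClass X]
  {P : Measure α} {Z : α → X} {s : Finset X}

theorem integral_comp_eq_sum_setIntegral (hZ : Measurable Z) (hs : ∀ ω, Z ω ∈ s)
    {Y : X → α → ℝ} (hY : ∀ x ∈ s, Integrable (Y x) P) :
    ∫ ω, Y (Z ω) ω ∂P = ∑ x ∈ s, ∫ ω in Z ⁻¹' {x}, Y x ω ∂P := by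
  have hpt : ∀ ω, Y (Z ω) ω = ∑ x ∈ s, (Z ⁻¹' {x}).indicator (Y x) ω := fun ω => by
    rw [Finset.sum_eq_single_of_mem (Z ω) (hs ω) fun x _ hx => ?_]
    · simp
    · exact Set.indicator_of_notMem (fun h => hx h.symm) _
  simp_rw [hpt]
  rw [integral_finsetSum _ fun x hx => (hY x hx).indicator (hZ (measurableSet_singleton x))]
  exact Finset.sum_congr rfl fun x _ => integral_indicator (hZ (measurableSet_singleton x))

theorem integral_comp_eq_sum_measureReal [IsFiniteMeasure P] (hZ : Measurable Z)
    (hs : ∀ ω, Z ω ∈ s) (g : X → ℝ) :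
    ∫ ω, g (Z ω) ∂P = ∑ x ∈ s, P.real (Z ⁻¹' {x}) * g x := by
  rw [integral_comp_eq_sum_setIntegral (Y := fun x _ => g x) hZ hs fun x _ => integrable_const _]
  simp

end FinitelyValued

section ConditionalMeans

variable {P : Measure Ω} {s : Set Ω} {Y W : Ω → ℝ}

theorem ce_eq_setIntegral_div (hs : MeasurableSet s) (Y : Ω → ℝ) :
    CE P Y s = (∫ ω in s, Y ω ∂P) / Pr P s := by
  simp only [CE, Exp, ← Set.indicator_mul_right, mul_one]
  rw [integral_indicator hs]

theorem ce_mul_pr (hs : MeasurableSet s) (h : Pr P s ≠ 0) (Y : Ω → ℝ) :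
    CE P Y s * Pr P s = ∫ ω in s, Y ω ∂P := by
  rw [ce_eq_setIntegral_div hs, div_mul_cancel₀ _ h]

theorem ce_sub (hs : MeasurableSet s) (hY : IntegrableOn Y s P) (hW : IntegrableOn W s P) :
    CE P (fun ω => Y ω - W ω) s = CE P Y s - CE P W s := by
  simp only [ce_eq_setIntegral_div hs, integral_sub hY hW, sub_div]

end ConditionalMeans

section Cells

variable {P : Measure Ω} {D : Ω → ℕ} {A : Ω → Fin K → ℕ} {𝒜 : Finset (Fin K → ℕ)}
  {Ypot : ℕ → (Fin K → ℕ) → Ω → ℝ}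

omit [MeasurableSpace Ω] in
theorem evDA_eq_preimage (x : ℕ × (Fin K → ℕ)) :
    evDA D A x.1 x.2 = (fun ω => (D ω, A ω)) ⁻¹' {x} := by
  ext ω
  simp [evDA, Prod.ext_iff]

theorem measurableSet_evDA (hD : Measurable D) (hA : Measurable A) (d : ℕ) (a : Fin K → ℕ) :
    MeasurableSet (evDA D A d a) :=
  (hD (measurableSet_singleton d)).inter (hA (measurableSet_singleton a))

omit [MeasurableSpace Ω] in
theorem mem_cells (hDbin : ∀ ω, D ω = 0 ∨ D ω = 1) (hAsupp : ∀ ω, A ω ∈ 𝒜) (ω : Ω) :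
    (D ω, A ω) ∈ ({0, 1} : Finset ℕ) ×ˢ 𝒜 :=
  Finset.mem_product.2 ⟨by rcases hDbin ω with h | h <;> simp [h], hAsupp ω⟩

theorem sum_cells (f : ℕ → (Fin K → ℕ) → ℝ) :
    ∑ x ∈ ({0, 1} : Finset ℕ) ×ˢ 𝒜, f x.1 x.2 = ∑ a ∈ 𝒜, (f 0 a + f 1 a) := by
  rw [Finset.sum_product_right]
  simp

omit [MeasurableSpace Ω] in
theorem yobs_eq (hDbin : ∀ ω, D ω = 0 ∨ D ω = 1) (hAsupp : ∀ ω, A ω ∈ 𝒜) (ω : Ω) :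
    Yobs D A 𝒜 Ypot ω = Ypot (D ω) (A ω) ω := by
  have := Finset.mem_product.1 (mem_cells hDbin hAsupp ω)
  simp [Yobs, ite_and, this.1, this.2]

theorem exp_comp_eq_sum [IsFiniteMeasure P] (hD : Measurable D) (hA : Measurable A)
    (hDbin : ∀ ω, D ω = 0 ∨ D ω = 1) (hAsupp : ∀ ω, A ω ∈ 𝒜) (g : ℕ → (Fin K → ℕ) → ℝ) :
    Exp P (fun ω => g (D ω) (A ω))
      = ∑ x ∈ ({0, 1} : Finset ℕ) ×ˢ 𝒜, Pr P (evDA D A x.1 x.2) * g x.1 x.2 := by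
  simp only [Exp, Pr, evDA_eq_preimage]
  exact integral_comp_eq_sum_measureReal (Z := fun ω => (D ω, A ω)) (hD.prodMk hA)
    (mem_cells hDbin hAsupp) fun x => g x.1 x.2

theorem exp_residLong_mul_eq_sum [IsFiniteMeasure P] (hD : Measurable D)
    (hA : Measurable A) (hDbin : ∀ ω, D ω = 0 ∨ D ω = 1) (hAsupp : ∀ ω, A ω ∈ 𝒜)
    (hInt : ∀ d ∈ ({0, 1} : Finset ℕ), ∀ a ∈ 𝒜, Integrable (Ypot d a) P)
    (hpos : ∀ d ∈ ({0, 1} : Finset ℕ), ∀ a ∈ 𝒜, 0 < Pr P (evDA D A d a))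
    (Δ θ₀ : ℝ) (θ : Fin K → ℝ) (g : ℕ → (Fin K → ℕ) → ℝ) :
    Exp P (fun ω => residLong D A 𝒜 Ypot Δ θ₀ θ ω * g (D ω) (A ω))
      = ∑ x ∈ ({0, 1} : Finset ℕ) ×ˢ 𝒜, Pr P (evDA D A x.1 x.2) *
          (CE P (Ypot x.1 x.2) (evDA D A x.1 x.2) - (Δ * x.1 + θ₀ + ∑ j, θ j * (x.2 j : ℝ)))
            * g x.1 x.2 := by
  let ℓ : ℕ × (Fin K → ℕ) → ℝ := fun x => Δ * x.1 + θ₀ + ∑ j, θ j * (x.2 j : ℝ)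
  have hpt : ∀ ω, residLong D A 𝒜 Ypot Δ θ₀ θ ω * g (D ω) (A ω)
      = (Ypot (D ω, A ω).1 (D ω, A ω).2 ω - ℓ (D ω, A ω)) * g (D ω, A ω).1 (D ω, A ω).2 :=
    fun ω => by simp only [residLong, yobs_eq hDbin hAsupp, ℓ]; ring
  simp only [Exp, hpt]
  rw [integral_comp_eq_sum_setIntegral (Y := fun x ω => (Ypot x.1 x.2 ω - ℓ x) * g x.1 x.2)
    (hD.prodMk hA) (mem_cells hDbin hAsupp) fun x hx =>
      ((hInt _ (Finset.mem_product.1 hx).1 _ (Finset.mem_product.1 hx).2).sub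
        (integrable_const _)).mul_const _]
  refine Finset.sum_congr rfl fun x hx => ?_
  obtain ⟨hd, ha⟩ := Finset.mem_product.1 hx
  rw [← evDA_eq_preimage, integral_mul_const, integral_sub (hInt _ hd _ ha).integrableOn
    (integrableOn_const (measure_ne_top _ _)), setIntegral_const,
    ← ce_mul_pr (measurableSet_evDA hD hA x.1 x.2) (hpos _ hd _ ha).ne']
  simp only [Pr, measureReal_def, smul_eq_mul, ℓ]
  ring

end Cells

section Treatment

variable {P : Measure Ω} {D : Ω → ℕ}

theorem measurableSet_evD (hD : Measurable D) (d : ℕ) : MeasurableSet (evD D d) :=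
  hD (measurableSet_singleton d)

theorem exp_natCast_eq_pr_evD (hD : Measurable D) (hDbin : ∀ ω, D ω = 0 ∨ D ω = 1) :
    Exp P (fun ω => (D ω : ℝ)) = Pr P (evD D 1) := by
  have hpt : (fun ω => (D ω : ℝ)) = (evD D 1).indicator 1 := funext fun ω => by
    rcases hDbin ω with h | h <;> simp [evD, h]
  rw [Exp, hpt]
  exact integral_indicator_one (measurableSet_evD hD 1)

theorem varD_eq (hD : Measurable D) (hDbin : ∀ ω, D ω = 0 ∨ D ω = 1) :
    varD P D = Pr P (evD D 1) * (1 - Pr P (evD D 1)) := by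
  have hsq : (fun ω => (D ω : ℝ) * D ω) = fun ω => (D ω : ℝ) := funext fun ω => by
    rcases hDbin ω with h | h <;> simp [h]
  rw [varD, Cov, hsq, exp_natCast_eq_pr_evD hD hDbin]
  ring

theorem pr_evD_zero [IsProbabilityMeasure P] (hD : Measurable D)
    (hDbin : ∀ ω, D ω = 0 ∨ D ω = 1) :
    Pr P (evD D 0) = 1 - Pr P (evD D 1) := by
  have hcompl : evD D 0 = (evD D 1)ᶜ := by
    ext ω
    rcases hDbin ω with h | h <;> simp [evD, h]
  rw [Pr, Pr, hcompl, prob_compl_eq_one_sub (measurableSet_evD hD 1),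
    ENNReal.toReal_sub_of_le prob_le_one ENNReal.one_ne_top, ENNReal.toReal_one]

theorem pr_evA [IsFiniteMeasure P] (hD : Measurable D) {A : Ω → Fin K → ℕ} (hA : Measurable A)
    (hDbin : ∀ ω, D ω = 0 ∨ D ω = 1) (a : Fin K → ℕ) :
    Pr P (evA A a) = Pr P (evDA D A 0 a) + Pr P (evDA D A 1 a) := by
  have hunion : evA A a = evDA D A 0 a ∪ evDA D A 1 a := by
    ext ω
    rcases hDbin ω with h | h <;> simp [evA, evDA, h]
  have hdisj : Disjoint (evDA D A 0 a) (evDA D A 1 a) :=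
    Set.disjoint_left.2 fun ω h₀ h₁ => by simp_all [evDA]
  simp only [Pr, ← measureReal_def]
  rw [hunion, measureReal_union hdisj (measurableSet_evDA hD hA 1 a)]

end Treatment

section CovarianceMatrix

open Matrix

variable {P : Measure Ω} {D : Ω → ℕ} {A : Ω → Fin K → ℕ}

theorem cov_comm (P : Measure Ω) (Z W : Ω → ℝ) : Cov P Z W = Cov P W Z := by
  simp only [Cov, mul_comm]

theorem cov_one_left [IsProbabilityMeasure P] (W : Ω → ℝ) : Cov P (fun _ => 1) W = 0 := by
  simp [Cov, Exp]

theorem varAmat_posDef (hPD : (covDAmat P D A).PosDef) : (varAmat P A).PosDef :=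
  hPD.submatrix Sum.inr_injective

theorem varD_pos (hPD : (covDAmat P D A).PosDef) : 0 < varD P D :=
  hPD.diag_pos (i := Sum.inl ())

theorem covDAmat_eq_fromBlocks :
    covDAmat P D A = fromBlocks (of fun _ _ => varD P D) (of fun _ j => covDA P D A j)
      (of fun _ j => covDA P D A j)ᴴ (varAmat P A) := by
  ext (i | i) (j | j) <;> simp [covDAmat, DAvec, varD, covDA, varAmat]
  exact cov_comm _ _ _

/-- `denomL` is the Schur complement of `Var(A)` in the covariance matrix of `(D, A)`. -/
theorem denomL_pos (hPD : (covDAmat P D A).PosDef) : 0 < denomL P D A := by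
  have hA := varAmat_posDef hPD
  let _ := hA.isUnit.invertible
  set B : Matrix Unit (Fin K) ℝ := of fun _ j => covDA P D A j
  set x : Unit → ℝ := fun _ => 1
  have hv : (x ⊕ᵥ -(((varAmat P A)⁻¹ * Bᴴ) *ᵥ x)) ≠ 0 := fun h => by
    simpa [x] using congrFun h (Sum.inl ())
  have h := hPD.dotProduct_mulVec_pos hv
  rw [dotProduct_mulVec, covDAmat_eq_fromBlocks, schur_complement_eq₂₂ _ _ _ _ hA.1,
    add_neg_cancel] at h
  simpa [x, B, denomL, Mlong, vecMul, dotProduct, Matrix.mul_apply, Finset.sum_mul] using h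

theorem sum_mlong_mul_cov (hPD : (covDAmat P D A).PosDef) (i : Fin K) :
    ∑ j, Mlong P D A j * Cov P (fun ω => (A ω i : ℝ)) (fun ω => (A ω j : ℝ))
      = Cov P (fun ω => (A ω i : ℝ)) (fun ω => (D ω : ℝ)) := by
  have hM : Mlong P D A ᵥ* varAmat P A = covDA P D A := by
    rw [show Mlong P D A = covDA P D A ᵥ* (varAmat P A)⁻¹ from rfl, vecMul_vecMul,
      nonsing_inv_mul _ (varAmat_posDef hPD).det_pos.ne'.isUnit, vecMul_one]
  have hi := congrFun hM i
  simp only [vecMul, dotProduct, varAmat, covDA, of_apply] at hi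
  rw [cov_comm]
  convert hi using 2 with j
  rw [cov_comm]

end CovarianceMatrix

/-- The Frisch–Waugh–Lovell residual of `D` on `(1, A)`, as a function of the cell `(d, a)`. -/
def treatResid (P : Measure Ω) (D : Ω → ℕ) (A : Ω → Fin K → ℕ) (d : ℕ) (a : Fin K → ℕ) : ℝ :=
  d - Pr P (evD D 1) - ∑ j, Mlong P D A j * ((a j : ℝ) - Exp P (fun ω => (A ω j : ℝ)))

section Residual

variable {P : Measure Ω} {D : Ω → ℕ} {A : Ω → Fin K → ℕ} {𝒜 : Finset (Fin K → ℕ)}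
  {Ypot : ℕ → (Fin K → ℕ) → Ω → ℝ}

theorem sum_mul_treatResid [IsFiniteMeasure P] (hD : Measurable D) (hA : Measurable A)
    (hDbin : ∀ ω, D ω = 0 ∨ D ω = 1) (hAsupp : ∀ ω, A ω ∈ 𝒜) (g : ℕ → (Fin K → ℕ) → ℝ) :
    ∑ x ∈ ({0, 1} : Finset ℕ) ×ˢ 𝒜, Pr P (evDA D A x.1 x.2) * g x.1 x.2 * treatResid P D A x.1 x.2
      = Cov P (fun ω => g (D ω) (A ω)) (fun ω => (D ω : ℝ))
        - ∑ j, Mlong P D A j * Cov P (fun ω => g (D ω) (A ω)) (fun ω => (A ω j : ℝ)) := by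
  simp only [treatResid, Cov]
  rw [sum_mul_sub_affine (fun x : ℕ × (Fin K → ℕ) => Pr P (evDA D A x.1 x.2) * g x.1 x.2)
    (fun x => (x.1 : ℝ)) (fun x j => (x.2 j : ℝ)), exp_comp_eq_sum hD hA hDbin hAsupp
    (fun d a => g d a * d), exp_comp_eq_sum hD hA hDbin hAsupp g, exp_natCast_eq_pr_evD hD hDbin]
  simp only [mul_assoc]
  congr 1
  refine Finset.sum_congr rfl fun j _ => ?_
  rw [exp_comp_eq_sum hD hA hDbin hAsupp (fun d a => g d a * (a j : ℝ))]

theorem sum_pr_mul_treatResid [IsProbabilityMeasure P] (hD : Measurable D) (hA : Measurable A)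
    (hDbin : ∀ ω, D ω = 0 ∨ D ω = 1) (hAsupp : ∀ ω, A ω ∈ 𝒜) :
    ∑ x ∈ ({0, 1} : Finset ℕ) ×ˢ 𝒜, Pr P (evDA D A x.1 x.2) * treatResid P D A x.1 x.2 = 0 := by
  simpa [cov_one_left] using sum_mul_treatResid (P := P) hD hA hDbin hAsupp fun _ _ => 1

theorem mul_denomL_eq_sum [IsProbabilityMeasure P] (hD : Measurable D) (hA : Measurable A)
    (hDbin : ∀ ω, D ω = 0 ∨ D ω = 1) (hAsupp : ∀ ω, A ω ∈ 𝒜)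
    (hInt : ∀ d ∈ ({0, 1} : Finset ℕ), ∀ a ∈ 𝒜, Integrable (Ypot d a) P)
    (hpos : ∀ d ∈ ({0, 1} : Finset ℕ), ∀ a ∈ 𝒜, 0 < Pr P (evDA D A d a))
    (hPD : (covDAmat P D A).PosDef) {Δ θ₀ : ℝ} {θ : Fin K → ℝ}
    (hO1 : Exp P (residLong D A 𝒜 Ypot Δ θ₀ θ) = 0)
    (hO2 : Exp P (fun ω => residLong D A 𝒜 Ypot Δ θ₀ θ ω * (D ω : ℝ)) = 0)
    (hO3 : ∀ j : Fin K, Exp P (fun ω => residLong D A 𝒜 Ypot Δ θ₀ θ ω * (A ω j : ℝ)) = 0) :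
    Δ * denomL P D A = ∑ x ∈ ({0, 1} : Finset ℕ) ×ˢ 𝒜, Pr P (evDA D A x.1 x.2) *
      CE P (Ypot x.1 x.2) (evDA D A x.1 x.2) * treatResid P D A x.1 x.2 := by
  have hE := exp_residLong_mul_eq_sum hD hA hDbin hAsupp hInt hpos Δ θ₀ θ
  have hS := sum_mul_treatResid (P := P) hD hA hDbin hAsupp
  have h₁ := (hE fun _ _ => 1).symm.trans (by simpa using hO1)
  have h_d := (hE fun d _ => d).symm.trans hO2
  have h_a := fun j => (hE fun _ a => a j).symm.trans (hO3 j)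
  simp only [mul_one] at h₁
  have horth : ∑ x ∈ ({0, 1} : Finset ℕ) ×ˢ 𝒜, Pr P (evDA D A x.1 x.2) *
      (CE P (Ypot x.1 x.2) (evDA D A x.1 x.2) - (Δ * x.1 + θ₀ + ∑ j, θ j * (x.2 j : ℝ)))
        * treatResid P D A x.1 x.2 = 0 := by
    simp only [treatResid]
    rw [sum_mul_sub_affine]
    simp [h₁, h_d, h_a]
  have har : ∀ i, ∑ x ∈ ({0, 1} : Finset ℕ) ×ˢ 𝒜,
      Pr P (evDA D A x.1 x.2) * (x.2 i : ℝ) * treatResid P D A x.1 x.2 = 0 := fun i => by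
    rw [hS fun _ a => a i, ← sum_mlong_mul_cov hPD i, sub_self]
  rw [sum_mul_eq_mul_sum_of_orthogonal horth
    (sum_pr_mul_treatResid hD hA hDbin hAsupp) har, hS fun d _ => d]
  rfl

end Residual

section Weights

variable {P : Measure Ω} {D : Ω → ℕ} {A : Ω → Fin K → ℕ}

theorem wdceL_mul_denomL (hD : Measurable D) (hDbin : ∀ ω, D ω = 0 ∨ D ω = 1)
    (hPD : (covDAmat P D A).PosDef) (a : Fin K → ℕ) :
    wdceL P D A a * denomL P D A = Pr P (evDA D A 1 a) * treatResid P D A 1 a := by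
  have hvar := varD_pos hPD
  rw [varD_eq hD hDbin] at hvar
  have hp : Pr P (evD D 1) ≠ 0 := left_ne_zero_of_mul hvar.ne'
  rw [wdceL, div_mul_cancel₀ _ (denomL_pos hPD).ne', varD_eq hD hDbin, piP, treatResid]
  field_simp
  push_cast
  ring

theorem windL_mul_denomL [IsProbabilityMeasure P] (hD : Measurable D) (hA : Measurable A)
    (hDbin : ∀ ω, D ω = 0 ∨ D ω = 1) (hPD : (covDAmat P D A).PosDef) (a : Fin K → ℕ) :
    windL P D A a * denomL P D A
      = Pr P (evDA D A 0 a) * treatResid P D A 0 a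
        + Pr P (evDA D A 1 a) * treatResid P D A 1 a := by
  have hvar := varD_pos hPD
  rw [varD_eq hD hDbin] at hvar
  have hp : Pr P (evD D 1) ≠ 0 := left_ne_zero_of_mul hvar.ne'
  have hp' : 1 - Pr P (evD D 1) ≠ 0 := right_ne_zero_of_mul hvar.ne'
  rw [windL, div_mul_cancel₀ _ (denomL_pos hPD).ne', varD_eq hD hDbin, piP, piP,
    pr_evD_zero hD hDbin, pr_evA hD hA hDbin, treatResid, treatResid]
  field_simp
  push_cast
  ring

end Weights

theorem long_regression_decomposition_general
    (P : Measure Ω) [IsProbabilityMeasure P]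
    (D : Ω → ℕ) (A : Ω → Fin K → ℕ) (𝒜 : Finset (Fin K → ℕ))
    (Ypot : ℕ → (Fin K → ℕ) → Ω → ℝ)
    (hD : Measurable D) (hA : Measurable A)
    (hDbin : ∀ ω, D ω = 0 ∨ D ω = 1)
    (hAsupp : ∀ ω, A ω ∈ 𝒜)
    (hInt : ∀ d ∈ ({0, 1} : Finset ℕ), ∀ a ∈ 𝒜, Integrable (Ypot d a) P)
    (hpos : ∀ d ∈ ({0, 1} : Finset ℕ), ∀ a ∈ 𝒜, 0 < Pr P (evDA D A d a))
    (hPD : (covDAmat P D A).PosDef)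
    (Δlong θ₀ : ℝ) (θ : Fin K → ℝ)
    (hO1 : Exp P (residLong D A 𝒜 Ypot Δlong θ₀ θ) = 0)
    (hO2 : Exp P (fun ω => residLong D A 𝒜 Ypot Δlong θ₀ θ ω * (D ω : ℝ)) = 0)
    (hO3 : ∀ j : Fin K, Exp P (fun ω => residLong D A 𝒜 Ypot Δlong θ₀ θ ω * (A ω j : ℝ)) = 0)
    :
    Δlong
      = (∑ a ∈ 𝒜, wdceL P D A a *
            CE P (fun ω => Ypot 1 a ω - Ypot 0 a ω) (evDA D A 1 a))
        + (∑ a ∈ 𝒜, windL P D A a *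
            (CE P (Ypot 0 a) (evDA D A 0 a) - CE P (Ypot 0 0) (evDA D A 0 0)))
        + (∑ a ∈ 𝒜, wdceL P D A a *
            (CE P (Ypot 0 a) (evDA D A 1 a) - CE P (Ypot 0 a) (evDA D A 0 a))) := by
  have hΔ := (mul_denomL_eq_sum hD hA hDbin hAsupp hInt hpos hPD hO1 hO2 hO3).trans
    (sum_cells fun d a => Pr P (evDA D A d a) * CE P (Ypot d a) (evDA D A d a) *
      treatResid P D A d a)
  have hsum := (sum_cells fun d a => Pr P (evDA D A d a) * treatResid P D A d a).symm.trans
    (sum_pr_mul_treatResid hD hA hDbin hAsupp)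
  have hCE : ∀ a ∈ 𝒜, CE P (fun ω => Ypot 1 a ω - Ypot 0 a ω) (evDA D A 1 a)
      = CE P (Ypot 1 a) (evDA D A 1 a) - CE P (Ypot 0 a) (evDA D A 1 a) := fun a ha =>
    ce_sub (measurableSet_evDA hD hA 1 a) (hInt 1 (by simp) a ha).integrableOn
      (hInt 0 (by simp) a ha).integrableOn
  rw [Finset.sum_congr rfl fun a ha => by rw [hCE a ha]]
  exact eq_sum_dce_add_sum_ind 0 (denomL_pos hPD).ne'
    (fun a _ => wdceL_mul_denomL hD hDbin hPD a) (fun a _ => windL_mul_denomL hD hA hDbin hPD a)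
    hsum hΔ

/-- Long regression, general decomposition (Theorem B.2 / thm:long_pre). -/
theorem long_regression_decomposition
    (P : Measure Ω) [IsProbabilityMeasure P]
    (D : Ω → ℕ) (A : Ω → Fin K → ℕ) (𝒜 : Finset (Fin K → ℕ))
    (Ypot : ℕ → (Fin K → ℕ) → Ω → ℝ)
    (hD : Measurable D) (hA : Measurable A)
    (hDbin : ∀ ω, D ω = 0 ∨ D ω = 1)
    (hAsupp : ∀ ω, A ω ∈ 𝒜) (h𝒜0 : (0 : Fin K → ℕ) ∈ 𝒜)
    (hInt : ∀ d ∈ ({0, 1} : Finset ℕ), ∀ a ∈ 𝒜, Integrable (Ypot d a) P)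
    (hpos : ∀ d ∈ ({0, 1} : Finset ℕ), ∀ a ∈ 𝒜, 0 < Pr P (evDA D A d a))
    (hPD : (covDAmat P D A).PosDef)
    (Δlong θ₀ : ℝ) (θ : Fin K → ℝ)
    (hO1 : Exp P (residLong D A 𝒜 Ypot Δlong θ₀ θ) = 0)
    (hO2 : Exp P (fun ω => residLong D A 𝒜 Ypot Δlong θ₀ θ ω * (D ω : ℝ)) = 0)
    (hO3 : ∀ j : Fin K, Exp P (fun ω => residLong D A 𝒜 Ypot Δlong θ₀ θ ω * (A ω j : ℝ)) = 0)
    :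
    Δlong
      = (∑ a ∈ 𝒜, wdceL P D A a *
            CE P (fun ω => Ypot 1 a ω - Ypot 0 a ω) (evDA D A 1 a))
        + (∑ a ∈ 𝒜, windL P D A a *
            (CE P (Ypot 0 a) (evDA D A 0 a) - CE P (Ypot 0 0) (evDA D A 0 0)))
        + (∑ a ∈ 𝒜, wdceL P D A a *
            (CE P (Ypot 0 a) (evDA D A 1 a) - CE P (Ypot 0 a) (evDA D A 0 a))) :=
  long_regression_decomposition_general P D A 𝒜 Ypot hD hA hDbin hAsupp hInt hpos hPD Δlong θ₀ θ hO1
    hO2 hO3
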